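/- arXiv:1209.0850 — 7 statements merged into one kernel-verified Lean document; each statement's English description precedes it below -/
import Mathlib

section
/- For R(z) = z^2 + 1 and every n ≥ 1, the set {z ∈ ℂ : R^n(z) = 0} has exactly 2^n elements. -/
/-!
The `n`-th iterate of `z ↦ z ^ 2 + c` is a polynomial `qₙ` of degree `2 ^ n`, so it suffices
to show that `qₙ` is separable. Since `qₙ₊₁' = 2 qₙ qₙ'`, every critical point of `qₙ` is mapped
by `qₙ` into the forward orbit of the critical value `c`. For real `c > 0` this orbit stays in
`[c, ∞)`, so no critical point of `qₙ` is a root of `qₙ`.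
-/

open Polynomial

noncomputable def quadraticIterate (c : ℂ) (n : ℕ) : ℂ[X] :=
  (X ^ 2 + C c).comp^[n] X

theorem eval_quadraticIterate (c : ℂ) (n : ℕ) (z : ℂ) :
    (quadraticIterate c n).eval z = (fun w : ℂ => w ^ 2 + c)^[n] z := by
  simp [quadraticIterate]

theorem quadraticIterate_succ (c : ℂ) (n : ℕ) :
    quadraticIterate c (n + 1) = quadraticIterate c n ^ 2 + C c := by
  rw [quadraticIterate, Function.iterate_succ_apply', ← quadraticIterate]
  simp

theorem natDegree_quadraticIterate (c : ℂ) (n : ℕ) :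
    (quadraticIterate c n).natDegree = 2 ^ n := by
  simp [quadraticIterate, natDegree_add_C]

theorem quadraticIterate_ne_zero (c : ℂ) (n : ℕ) : quadraticIterate c n ≠ 0 :=
  ne_zero_of_natDegree_gt (n := 0) (by rw [natDegree_quadraticIterate]; positivity)

theorem exists_real_ge_eval_quadraticIterate_of_isRoot_derivative (c : ℝ) (n : ℕ) {z : ℂ}
    (hz : (derivative (quadraticIterate c n)).IsRoot z) :
    ∃ r : ℝ, c ≤ r ∧ (quadraticIterate c n).eval z = r := by
  induction n with
  | zero => simp [quadraticIterate] at hz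
  | succ n ih =>
    have hderiv : (derivative (quadraticIterate c (n + 1))).eval z =
        2 * (quadraticIterate c n).eval z * (derivative (quadraticIterate c n)).eval z := by
      simp [quadraticIterate_succ, derivative_pow]
    rw [IsRoot.def, hderiv, mul_eq_zero, mul_eq_zero] at hz
    rcases hz with (htwo | hroot) | hcrit
    · norm_num at htwo
    · exact ⟨c, le_rfl, by simp [quadraticIterate_succ, hroot]⟩
    · obtain ⟨r, hcr, hr⟩ := ih hcrit
      refine ⟨r ^ 2 + c, by nlinarith, ?_⟩
      simp [quadraticIterate_succ, hr]

theorem separable_quadraticIterate (c : ℝ) (hc : 0 < c) (n : ℕ) :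
    (quadraticIterate c n).Separable := by
  rw [Separable, isCoprime_iff_aeval_ne_zero_of_isAlgClosed (k := ℂ) ℂ]
  intro z
  simp only [coe_aeval_eq_eval, ← not_and_or, ← IsRoot.def]
  rintro ⟨hroot, hcrit⟩
  obtain ⟨r, hcr, hr⟩ := exists_real_ge_eval_quadraticIterate_of_isRoot_derivative c n hcrit
  have : (r : ℂ) = 0 := hr ▸ hroot
  exact (hc.trans_le hcr).ne' (Complex.ofReal_eq_zero.mp this)

theorem ncard_setOf_iterate_sq_add_eq_zero (c : ℝ) (hc : 0 < c) (n : ℕ) :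
    {z : ℂ | (fun w : ℂ => w ^ 2 + c)^[n] z = 0}.ncard = 2 ^ n := by
  have hset :
      {z : ℂ | (fun w : ℂ => w ^ 2 + c)^[n] z = 0} = (quadraticIterate c n).rootSet ℂ := by
    ext z
    simp [mem_rootSet, quadraticIterate_ne_zero, eval_quadraticIterate]
  rw [hset, Set.ncard_eq_toFinset_card', Set.toFinset_card,
    card_rootSet_eq_natDegree (separable_quadraticIterate c hc n) (IsAlgClosed.splits _),
    natDegree_quadraticIterate]

theorem stmt_1_general (n : ℕ) :
    Set.ncard {z : ℂ | (fun w : ℂ => w ^ 2 + 1)^[n] z = 0} = 2 ^ n := by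
  simpa using ncard_setOf_iterate_sq_add_eq_zero 1 one_pos n

/-- For `R(z) = z^2 + 1` and every `n ≥ 1`, the set `{z : ℂ | R^[n] z = 0}`
has exactly `2 ^ n` elements. -/
theorem stmt_1 (n : ℕ) (hn : 1 ≤ n) :
    Set.ncard {z : ℂ | (fun w : ℂ => w ^ 2 + 1)^[n] z = 0} = 2 ^ n :=
  stmt_1_general n
end

section
/- For R(z) = z^2 - 1, define b_n = the cardinality of {z ∈ ℂ : R^n(z) = 0}. Then b_{2n} = (1 + 2^{2n+1})/3 and b_{2n+1} = (2 + 2^{2n+2})/3 for all n ≥ 0. -/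
/-!
Under `R z = z ^ 2 - 1` every point `w` has the two preimages `±√(w + 1)`, except the critical
value `-1`, whose only preimage is `0`. So `b (m + 1) = 2 * b m - [-1 ∈ R^{-m}(0)]`, and since `-1`
lies on the 2-cycle `{0, -1}`, `R^[m] (-1) = 0` exactly when `m` is odd. Solving
`b (m + 1) = 2 * b m - [m odd]` from `b 0 = 1` gives `3 * b m = 2 ^ (m + 1) + (1 or 2)`,
according to the parity of `m`.
-/

open Function

theorem Set.ncard_preimage_add_ncard_inter_singleton {α β : Type*} {f : α → β} {c : β}
    (hc : (f ⁻¹' {c}).ncard = 1) (hf : ∀ w ≠ c, (f ⁻¹' {w}).ncard = 2) {S : Set β}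
    (hS : S.Finite) : (f ⁻¹' S).ncard + (S ∩ {c}).ncard = 2 * S.ncard := by
  classical
  have hfin : ∀ w, (f ⁻¹' {w}).Finite := fun w =>
    Set.finite_of_ncard_ne_zero (by by_cases hw : w = c <;> simp [hw, hc, hf])
  have hcS : (S ∩ {c}).ncard = ∑ w ∈ hS.toFinset, if w = c then 1 else 0 := by
    rw [Finset.sum_ite_eq']
    by_cases hcS : c ∈ S <;> simp [hcS]
  rw [← Set.biUnion_preimage_singleton,
    hS.ncard_biUnion (fun w _ => hfin w) (Set.pairwiseDisjoint_fiber f S),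
    finsum_mem_eq_finite_toFinset_sum _ hS, Set.ncard_eq_toFinset_card S hS, hcS,
    ← Finset.sum_add_distrib, Finset.card_eq_sum_ones, Finset.mul_sum]
  refine Finset.sum_congr rfl fun w _ => ?_
  by_cases hw : w = c <;> simp [hw, hc, hf]

theorem preimage_sq_sub_singleton {R : Type*} [CommRing R] [NoZeroDivisors R] {c w s : R}
    (hs : s ^ 2 = w + c) : (fun z : R => z ^ 2 - c) ⁻¹' {w} = {s, -s} := by
  ext z
  simp [sub_eq_iff_eq_add, ← hs, sq_eq_sq_iff_eq_or_eq_neg]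

theorem ncard_preimage_sq_sub_singleton_neg {R : Type*} [CommRing R] [NoZeroDivisors R] (c : R) :
    ((fun z : R => z ^ 2 - c) ⁻¹' {-c}).ncard = 1 := by
  rw [preimage_sq_sub_singleton (s := 0) (by ring)]
  simp

theorem isPeriodicPt_sq_sub_one_neg_one {R : Type*} [Ring R] :
    IsPeriodicPt (fun z : R => z ^ 2 - 1) 2 (-1) := by
  simp [IsPeriodicPt, IsFixedPt]

theorem iterate_sq_sub_one_neg_one_eq_zero_iff {R : Type*} [Ring R] [Nontrivial R] (m : ℕ) :
    (fun z : R => z ^ 2 - 1)^[m] (-1) = 0 ↔ Odd m := by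
  obtain ⟨k, rfl | rfl⟩ := Nat.even_or_odd' m
  · rw [(isPeriodicPt_sq_sub_one_neg_one.mul_const k).eq]
    simp
  · rw [iterate_succ_apply', (isPeriodicPt_sq_sub_one_neg_one.mul_const k).eq]
    simp

theorem Function.setOf_iterate_succ_eq {α : Type*} (f : α → α) (a : α) (m : ℕ) :
    {z | f^[m + 1] z = a} = f ⁻¹' {z | f^[m] z = a} := by
  ext z
  simp only [iterate_succ_apply, Set.mem_ofPred_eq, Set.mem_preimage]

section AlgClosed

variable {K : Type*} [Field K] [IsAlgClosed K]

theorem finite_preimage_sq_sub_singleton (c w : K) :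
    ((fun z : K => z ^ 2 - c) ⁻¹' {w}).Finite := by
  obtain ⟨s, hs⟩ := IsAlgClosed.exists_pow_nat_eq (w + c) two_pos
  rw [preimage_sq_sub_singleton hs]
  exact Set.toFinite _

theorem ncard_preimage_sq_sub_singleton [NeZero (2 : K)] {c w : K} (hw : w ≠ -c) :
    ((fun z : K => z ^ 2 - c) ⁻¹' {w}).ncard = 2 := by
  obtain ⟨s, hs⟩ := IsAlgClosed.exists_pow_nat_eq (w + c) two_pos
  rw [preimage_sq_sub_singleton hs]
  refine Set.ncard_pair fun hneg => hw ?_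
  rwa [eq_neg_iff_add_eq_zero, ← two_mul, mul_eq_zero, or_iff_right two_ne_zero,
    ← pow_eq_zero_iff two_ne_zero, hs, add_eq_zero_iff_eq_neg] at hneg

theorem finite_setOf_iterate_sq_sub_one_eq_zero (m : ℕ) :
    {z : K | (fun w : K => w ^ 2 - 1)^[m] z = 0}.Finite := by
  induction m with
  | zero => simp
  | succ m ih =>
    rw [setOf_iterate_succ_eq]
    exact ih.preimage' fun w _ => finite_preimage_sq_sub_singleton 1 w

theorem ncard_setOf_iterate_sq_sub_one_succ_eq_zero [NeZero (2 : K)] (m : ℕ) :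
    {z : K | (fun w : K => w ^ 2 - 1)^[m + 1] z = 0}.ncard + (if Odd m then 1 else 0)
      = 2 * {z : K | (fun w : K => w ^ 2 - 1)^[m] z = 0}.ncard := by
  have hinter : ({z : K | (fun w : K => w ^ 2 - 1)^[m] z = 0} ∩ {-1}).ncard
      = if Odd m then 1 else 0 := by
    split_ifs with hm
    · rw [Set.inter_singleton_of_mem (a := (-1 : K))
        ((iterate_sq_sub_one_neg_one_eq_zero_iff m).2 hm), Set.ncard_singleton]
    · rw [Set.inter_singleton_eq_empty (a := (-1 : K)).2
        (mt (iterate_sq_sub_one_neg_one_eq_zero_iff m).1 hm), Set.ncard_empty]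
  rw [← hinter, setOf_iterate_succ_eq]
  exact Set.ncard_preimage_add_ncard_inter_singleton (ncard_preimage_sq_sub_singleton_neg 1)
    (fun w hw => ncard_preimage_sq_sub_singleton hw) (finite_setOf_iterate_sq_sub_one_eq_zero m)

theorem three_mul_ncard_setOf_iterate_sq_sub_one_eq_zero [NeZero (2 : K)] (m : ℕ) :
    3 * {z : K | (fun w : K => w ^ 2 - 1)^[m] z = 0}.ncard
      = 2 ^ (m + 1) + if Even m then 1 else 2 := by
  induction m with
  | zero => simp
  | succ m ih =>
    have hrec := ncard_setOf_iterate_sq_sub_one_succ_eq_zero (K := K) m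
    rw [pow_succ]
    rcases Nat.even_or_odd m with hm | hm
    · rw [if_pos hm] at ih
      rw [if_neg (Nat.not_odd_iff_even.2 hm)] at hrec
      rw [if_neg (Nat.not_even_iff_odd.2 hm.add_one)]
      omega
    · rw [if_neg (Nat.not_even_iff_odd.2 hm)] at ih
      rw [if_pos hm] at hrec
      rw [if_pos hm.add_one]
      omega

end AlgClosed

/-- For `R(z) = z^2 - 1`, let `b n` be the number of distinct complex solutions of
`R^[n] z = 0`. Then `b (2n) = (1 + 2^(2n+1))/3` and `b (2n+1) = (2 + 2^(2n+2))/3`,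
stated without division as `3 * b (2n) = 1 + 2^(2n+1)` etc. -/
theorem stmt_2 (b : ℕ → ℕ)
    (hb : ∀ n, b n = Set.ncard {z : ℂ | (fun w : ℂ => w ^ 2 - 1)^[n] z = 0}) :
    ∀ n : ℕ, 3 * b (2 * n) = 1 + 2 ^ (2 * n + 1) ∧
      3 * b (2 * n + 1) = 2 + 2 ^ (2 * n + 2) := by
  intro n
  have heven := three_mul_ncard_setOf_iterate_sq_sub_one_eq_zero (K := ℂ) (2 * n)
  have hodd := three_mul_ncard_setOf_iterate_sq_sub_one_eq_zero (K := ℂ) (2 * n + 1)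
  rw [if_pos (even_two_mul n)] at heven
  rw [if_neg (Nat.not_even_iff_odd.2 (odd_two_mul_add_one n))] at hodd
  rw [hb, hb, heven, hodd]
  exact ⟨add_comm _ _, add_comm _ _⟩
end

section
/- The sequence b_n = |{z ∈ ℂ : R^n(z) = 0}| for R(z) = z^2 - 1 satisfies b_0 = 1, b_1 = 2, and b_{n+1} = 2·b_n - [n ≡ 1 mod 2], i.e., b_{n+1} = 2 b_n - 1 if n is odd and b_{n+1} = 2 b_n if n is even (for n ≥ 1). -/
noncomputable section StmtAux
open scoped Classical

private def Rf : ℂ → ℂ := fun w => w ^ 2 - 1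

private lemma Rf_def : (fun w : ℂ => w ^ 2 - 1) = Rf := rfl

/-- fibers of squaring -/
private lemma sq_fiber (a : ℂ) :
    ∃ c : ℂ, c ^ 2 = a ∧ {z : ℂ | z ^ 2 = a} = {c, -c} := by
  obtain ⟨c, hc⟩ := IsAlgClosed.exists_pow_nat_eq a (n := 2) (by norm_num)
  refine ⟨c, hc, ?_⟩
  ext z
  simp only [Set.mem_setOf_eq, Set.mem_insert_iff, Set.mem_singleton_iff]
  constructor
  · intro h
    have h2 : (z - c) * (z + c) = 0 := by linear_combination h - hc
    rcases mul_eq_zero.mp h2 with h3 | h3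
    · left; linear_combination h3
    · right; linear_combination h3
  · rintro (rfl | rfl)
    · exact hc
    · linear_combination hc

private lemma fiber_card (a : ℂ) :
    {z : ℂ | z ^ 2 = a}.Finite ∧
      {z : ℂ | z ^ 2 = a}.ncard = (if a = 0 then 1 else 2) := by
  obtain ⟨c, hc, hset⟩ := sq_fiber a
  rw [hset]
  constructor
  · exact (Set.finite_singleton _).insert _
  · by_cases h : a = 0
    · subst h
      have hc0 : c = 0 := by
        have := pow_eq_zero_iff (n := 2) (by norm_num) |>.mp hc
        exact this
      simp [hc0]
    · have hc0 : c ≠ 0 := by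
        intro h0; apply h; rw [← hc, h0]; ring
      have hne : c ≠ -c := by
        intro h0
        apply hc0
        have : (2 : ℂ) * c = 0 := by linear_combination h0
        simpa using this
      rw [if_neg h, Set.ncard_insert_of_notMem (by simpa using hne),
        Set.ncard_singleton]

private lemma count_sqpre {A : Set ℂ} (hA : A.Finite) :
    {z : ℂ | z ^ 2 ∈ A}.Finite ∧
      {z : ℂ | z ^ 2 ∈ A}.ncard
        = 2 * A.ncard - (if (0 : ℂ) ∈ A then 1 else 0) := by
  refine Set.Finite.induction_on (motive := fun A _ => {z : ℂ | z ^ 2 ∈ A}.Finite ∧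
      {z : ℂ | z ^ 2 ∈ A}.ncard = 2 * A.ncard - (if (0 : ℂ) ∈ A then 1 else 0))
      A hA (by simp) ?_
  intro a A ha hA ih
  · 
    have hsplit : {z : ℂ | z ^ 2 ∈ insert a A}
        = {z : ℂ | z ^ 2 = a} ∪ {z : ℂ | z ^ 2 ∈ A} := by
      ext z; simp [Set.mem_insert_iff, or_comm]
    have hdisj : Disjoint {z : ℂ | z ^ 2 = a} {z : ℂ | z ^ 2 ∈ A} := by
      rw [Set.disjoint_left]
      intro z hz1 hz2
      exact ha (by rwa [← hz1])
    obtain ⟨hf1, hc1⟩ := fiber_card a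
    obtain ⟨hf2, hc2⟩ := ih
    have hfin : {z : ℂ | z ^ 2 ∈ insert a A}.Finite := by
      rw [hsplit]; exact hf1.union hf2
    refine ⟨hfin, ?_⟩
    rw [hsplit, Set.ncard_union_eq hdisj hf1 hf2, hc1, hc2,
      Set.ncard_insert_of_notMem ha hA]
    by_cases haz : a = 0
    · subst haz
      rw [if_pos rfl, if_pos (Set.mem_insert _ _), if_neg ha]
      omega
    · rw [if_neg haz]
      by_cases h0 : (0 : ℂ) ∈ A
      · have hpos : 0 < A.ncard := (Set.ncard_pos hA).mpr ⟨0, h0⟩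
        rw [if_pos h0, if_pos (Set.mem_insert_of_mem _ h0)]
        omega
      · rw [if_neg h0, if_neg (by
          simp only [Set.mem_insert_iff]; push_neg
          exact ⟨fun h => haz h.symm, h0⟩)]
        omega

private lemma step (n : ℕ) :
    {z : ℂ | Rf^[n + 1] z = 0}
      = {z : ℂ | z ^ 2 ∈ (fun w => w + 1) '' {z : ℂ | Rf^[n] z = 0}} := by
  ext z
  simp only [Set.mem_setOf_eq, Function.iterate_succ_apply, Set.mem_image]
  constructor
  · intro h
    exact ⟨z ^ 2 - 1, h, by ring⟩
  · rintro ⟨w, hw, hwz⟩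
    have : Rf z = w := by
      show z ^ 2 - 1 = w
      linear_combination -hwz
    rwa [this]

private lemma key (n : ℕ) :
    {z : ℂ | Rf^[n] z = 0}.Finite ∧
      {z : ℂ | Rf^[n + 1] z = 0}.ncard
        = 2 * {z : ℂ | Rf^[n] z = 0}.ncard - (if Rf^[n] (-1) = 0 then 1 else 0) := by
  have hfin : ∀ m, {z : ℂ | Rf^[m] z = 0}.Finite := by
    intro m
    induction m with
    | zero =>
      simp only [Function.iterate_zero, id_eq]
      exact (Set.finite_singleton 0).subset (by intro z hz; simpa using hz)
    | succ m ih =>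
      rw [step m]
      exact (count_sqpre (ih.image _)).1
  refine ⟨hfin n, ?_⟩
  have himg : ((fun w : ℂ => w + 1) '' {z : ℂ | Rf^[n] z = 0}).Finite :=
    (hfin n).image _
  rw [step n, (count_sqpre himg).2,
    Set.ncard_image_of_injective _ (add_left_injective 1)]
  congr 1
  have : ((0 : ℂ) ∈ (fun w : ℂ => w + 1) '' {z : ℂ | Rf^[n] z = 0})
      ↔ Rf^[n] (-1) = 0 := by
    simp only [Set.mem_image, Set.mem_setOf_eq]
    constructor
    · rintro ⟨w, hw, hw0⟩
      have : w = -1 := by linear_combination hw0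
      rwa [this] at hw
    · intro h
      exact ⟨-1, h, by ring⟩
  exact if_congr this rfl rfl

private lemma iter_even (k : ℕ) : Rf^[2 * k] 0 = 0 ∧ Rf^[2 * k] (-1) = -1 := by
  induction k with
  | zero => simp
  | succ k ih =>
    have h2 : 2 * (k + 1) = 2 * k + 1 + 1 := by ring
    have hR0 : Rf 0 = -1 := by show (0:ℂ)^2 - 1 = -1; ring
    have hR1 : Rf (-1) = 0 := by show (-1:ℂ)^2 - 1 = 0; ring
    rw [h2]
    constructor
    · rw [Function.iterate_succ_apply, Function.iterate_succ_apply, hR0, hR1]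
      exact ih.1
    · rw [Function.iterate_succ_apply, Function.iterate_succ_apply, hR1, hR0]
      exact ih.2

end StmtAux

/-- For `R(z) = z^2 - 1` and `b n` the number of distinct complex roots of
`R^[n] z = 0`: `b 0 = 1`, `b 1 = 2`, and for `n ≥ 1`,
`b (n+1) = 2 * b n - 1` if `n` is odd and `b (n+1) = 2 * b n` if `n` is even. -/
theorem stmt_3 (b : ℕ → ℕ)
    (hb : ∀ n, b n = Set.ncard {z : ℂ | (fun w : ℂ => w ^ 2 - 1)^[n] z = 0}) :
    b 0 = 1 ∧ b 1 = 2 ∧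
      ∀ n : ℕ, 1 ≤ n →
        (Odd n → b (n + 1) = 2 * b n - 1) ∧ (Even n → b (n + 1) = 2 * b n) := by
  simp only [Rf_def] at hb
  have hb0 : b 0 = 1 := by
    rw [hb 0]
    simp only [Function.iterate_zero, id_eq]
    rw [show {z : ℂ | z = 0} = {0} from Set.setOf_eq_eq_singleton]
    exact Set.ncard_singleton 0
  have hrec : ∀ n, b (n + 1) = 2 * b n - (if Rf^[n] (-1) = 0 then 1 else 0) := by
    intro n
    rw [hb, hb]
    exact (key n).2
  refine ⟨hb0, ?_, ?_⟩
  · rw [hrec 0, if_neg (by simp : ¬ Rf^[0] (-1) = (0 : ℂ)), hb0]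
  · intro n hn
    constructor
    · rintro ⟨k, rfl⟩
      have hR1 : Rf (-1) = 0 := by show (-1:ℂ)^2 - 1 = 0; ring
      have hodd : Rf^[2 * k + 1] (-1) = 0 := by
        rw [Function.iterate_succ_apply, hR1]
        exact (iter_even k).1
      rw [hrec (2 * k + 1), if_pos hodd]
    · rintro ⟨k, hk⟩
      have hkk : 2 * k = k + k := by ring
      have heven : Rf^[2 * k] (-1) = -1 := (iter_even k).2
      have hne : Rf^[2 * k] (-1) ≠ 0 := by rw [heven]; norm_num
      rw [hk, ← hkk] at *
      rw [hrec (2 * k), if_neg hne]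
      omega
end

section
/- Let f_m be defined by f_1 = 1, f_{m+1}(x) = x f_m(x)^2 + 1, and for m ≥ 2 set c_m = min{x ∈ ℝ : f_m(x) = 0} (the minimum exists). Then c_2 = -1 and the sequence is strictly decreasing: c_{m+1} < c_m for all m ≥ 2. -/
/-!
Each `f m` with `m ≥ 1` is monic, so `f (m + 1) = X * (f m) ^ 2 + 1` is monic of odd degree and
tends to `-∞` at `-∞`. At the smallest root `c m` of `f m` it takes the value `1`, so by the
intermediate value theorem `f (m + 1)` has a root strictly left of `c m`.
-/

open Polynomial Filter

namespace Polynomial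

theorem tendsto_eval_atBot_atBot_of_odd_natDegree {𝕜 : Type*} [NormedField 𝕜] [LinearOrder 𝕜]
    [IsStrictOrderedRing 𝕜] [OrderTopology 𝕜] {P : 𝕜[X]} (hodd : Odd P.natDegree)
    (hlc : 0 < P.leadingCoeff) : Tendsto (fun x => P.eval x) atBot atBot := by
  have hdeg : 0 < P.degree := by
    rw [degree_eq_natDegree (leadingCoeff_ne_zero.mp hlc.ne')]
    exact_mod_cast hodd.pos
  have hneg : Tendsto (fun x => (P.comp (-X)).eval x) atTop atBot :=
    tendsto_atBot_of_leadingCoeff_nonpos _ (by rwa [degree_comp_neg_X])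
      (by rw [comp_neg_X_leadingCoeff_eq, hodd.neg_one_pow]; linarith)
  simpa [Function.comp_def] using hneg.comp tendsto_neg_atBot_atTop

theorem exists_isRoot_lt_of_odd_natDegree {P : ℝ[X]} (hodd : Odd P.natDegree)
    (hlc : 0 < P.leadingCoeff) {a : ℝ} (ha : 0 < P.eval a) : ∃ z < a, P.IsRoot z := by
  obtain ⟨b, hb, hba⟩ := ((tendsto_eval_atBot_atBot_of_odd_natDegree hodd hlc).eventually
    (eventually_lt_atBot 0) |>.and (eventually_lt_atBot a)).exists
  obtain ⟨z, hz, hPz⟩ := intermediate_value_Ico hba.le P.continuous.continuousOn ⟨hb.le, ha⟩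
  exact ⟨z, hz.2, hPz⟩

variable {R : Type*} [CommSemiring R] [Nontrivial R] {Q : R[X]}

theorem natDegree_X_mul_sq (hQ : Q.Monic) : (X * Q ^ 2).natDegree = 2 * Q.natDegree + 1 := by
  rw [monic_X.natDegree_mul (hQ.pow 2), natDegree_X, hQ.natDegree_pow]
  ring

theorem degree_one_lt_degree_X_mul_sq (hQ : Q.Monic) : (1 : R[X]).degree < (X * Q ^ 2).degree :=
  degree_lt_degree (by rw [natDegree_one, natDegree_X_mul_sq hQ]; omega)

theorem natDegree_X_mul_sq_add_one (hQ : Q.Monic) :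
    (X * Q ^ 2 + 1).natDegree = 2 * Q.natDegree + 1 := by
  rw [natDegree_add_eq_left_of_degree_lt (degree_one_lt_degree_X_mul_sq hQ), natDegree_X_mul_sq hQ]

theorem Monic.X_mul_sq_add_one (hQ : Q.Monic) : (X * Q ^ 2 + 1).Monic :=
  (monic_X.mul (hQ.pow 2)).add_of_left (degree_one_lt_degree_X_mul_sq hQ)

end Polynomial

/-- With `f 1 = 1`, `f (m+1) = X * (f m)^2 + 1` over `ℝ`, for `m ≥ 2` let
`c m` be the minimum of the real zero set of `f m` (which exists).
Then `c 2 = -1` and `c (m+1) < c m` for all `m ≥ 2`. -/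
theorem stmt_6 (f : ℕ → Polynomial ℝ) (h1 : f 1 = 1)
    (hrec : ∀ m : ℕ, 1 ≤ m → f (m + 1) = X * (f m) ^ 2 + 1)
    (c : ℕ → ℝ)
    (hc : ∀ m : ℕ, 2 ≤ m → IsLeast {x : ℝ | (f m).eval x = 0} (c m)) :
    c 2 = -1 ∧ ∀ m : ℕ, 2 ≤ m → c (m + 1) < c m := by
  have hmonic : ∀ m, 1 ≤ m → (f m).Monic := fun m hm =>
    Nat.le_induction (h1 ▸ monic_one) (fun n hn ih => hrec n hn ▸ ih.X_mul_sq_add_one) m hm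
  refine ⟨?_, fun m hm => ?_⟩
  · have h2 : (f 2).eval (c 2) = 0 := (hc 2 le_rfl).1
    rw [hrec 1 le_rfl, h1] at h2
    simp only [one_pow, mul_one, eval_add, eval_X, eval_one] at h2
    linarith
  · have hfm : (f m).Monic := hmonic m (by omega)
    have hodd : Odd (f (m + 1)).natDegree := by
      rw [hrec m (by omega), natDegree_X_mul_sq_add_one hfm]
      exact odd_two_mul_add_one _
    have hlc : 0 < (f (m + 1)).leadingCoeff := by
      rw [(hmonic (m + 1) (by omega)).leadingCoeff]
      exact one_pos
    have hpos : 0 < (f (m + 1)).eval (c m) := by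
      have hcm : (f m).eval (c m) = 0 := (hc m hm).1
      simp [hrec m (by omega), hcm]
    obtain ⟨z, hz, hroot⟩ := exists_isRoot_lt_of_odd_natDegree hodd hlc hpos
    exact ((hc (m + 1) (by omega)).2 hroot).trans_lt hz
end

section
/- For every m ≥ 2 there exists a real constant c such that for the quadratic map R(z) = z^2 + c one has R^m(0) = 0 while R^k(0) ≠ 0 for all k = 1, …, m−1 (i.e., 0 is periodic of exact period m). -/
/-!
Write `critOrbit n c = R_c^[n] 0` and let `minRoot n` be the least real `c` with
`critOrbit n c = 0`; it exists for `n ≥ 1` because for `c ≤ -2` the orbit of `0` stays at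
distance at least `-c` from the origin. Since `critOrbit (n + 1) (minRoot n) = minRoot n` and
`critOrbit (n + 1) (-2) > 0`, the intermediate value theorem gives a root of `critOrbit (n + 1)`
strictly left of `minRoot n` as soon as `minRoot n < 0`. Starting from `minRoot 1 = 0` and
`critOrbit 2 (-1) = 0`, the sequence `minRoot` is strictly decreasing on `n ≥ 1`, so
`c = minRoot m` is not a root of any `critOrbit k` with `1 ≤ k < m`.
-/

noncomputable section

def critOrbit (n : ℕ) (c : ℝ) : ℝ := (fun z : ℝ => z ^ 2 + c)^[n] 0

@[simp] lemma critOrbit_zero (c : ℝ) : critOrbit 0 c = 0 := rfl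

lemma critOrbit_succ (n : ℕ) (c : ℝ) : critOrbit (n + 1) c = critOrbit n c ^ 2 + c :=
  Function.iterate_succ_apply' _ _ _

@[simp] lemma critOrbit_one (c : ℝ) : critOrbit 1 c = c := by
  simp [critOrbit_succ]

@[simp] lemma critOrbit_at_zero (n : ℕ) : critOrbit n 0 = 0 := by
  induction n with
  | zero => rfl
  | succ n ih => simp [critOrbit_succ, ih]

lemma continuous_critOrbit (n : ℕ) : Continuous (critOrbit n) := by
  induction n with
  | zero => exact continuous_const
  | succ n ih =>
    rw [show critOrbit (n + 1) = fun c => critOrbit n c ^ 2 + c from funext (critOrbit_succ n)]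
    fun_prop

lemma neg_le_abs_critOrbit {c : ℝ} (hc : c ≤ -2) {n : ℕ} (hn : 1 ≤ n) :
    -c ≤ |critOrbit n c| := by
  induction n, hn using Nat.le_induction with
  | base => simp [abs_of_nonpos (by linarith : c ≤ 0)]
  | succ n _ ih =>
    have hsq : c ^ 2 ≤ critOrbit n c ^ 2 := by
      rw [← sq_abs (critOrbit n c), ← sq_abs c, abs_of_nonpos (by linarith : c ≤ 0)]
      exact pow_le_pow_left₀ (by linarith) ih 2
    rw [critOrbit_succ]
    nlinarith [le_abs_self (critOrbit n c ^ 2 + c)]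

lemma neg_two_lt_of_critOrbit_eq_zero {n : ℕ} (hn : 1 ≤ n) {c : ℝ} (h : critOrbit n c = 0) :
    -2 < c := by
  by_contra! hc
  have := neg_le_abs_critOrbit hc hn
  rw [h, abs_zero] at this
  linarith

lemma critOrbit_succ_neg_two_pos {n : ℕ} (hn : 1 ≤ n) : 0 < critOrbit (n + 1) (-2) := by
  have h := neg_le_abs_critOrbit (le_refl (-2 : ℝ)) hn
  rw [critOrbit_succ, ← sq_abs]
  nlinarith

def minRoot (n : ℕ) : ℝ := sInf {c | critOrbit n c = 0}

section minRoot

variable {n : ℕ} (hn : 1 ≤ n)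
include hn

lemma bddBelow_critOrbit_roots : BddBelow {c | critOrbit n c = 0} :=
  ⟨-2, fun _ hc => (neg_two_lt_of_critOrbit_eq_zero hn hc).le⟩

lemma critOrbit_minRoot : critOrbit n (minRoot n) = 0 :=
  (isClosed_eq (continuous_critOrbit n) continuous_const).csInf_mem
    ⟨0, critOrbit_at_zero n⟩ (bddBelow_critOrbit_roots hn)

lemma minRoot_le {c : ℝ} (h : critOrbit n c = 0) : minRoot n ≤ c :=
  csInf_le (bddBelow_critOrbit_roots hn) h

lemma minRoot_nonpos : minRoot n ≤ 0 :=
  minRoot_le hn (critOrbit_at_zero n)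

lemma minRoot_succ_lt {x : ℝ} (hx : critOrbit n x = 0) (hx0 : x < 0) :
    minRoot (n + 1) < x := by
  have hfix : critOrbit (n + 1) x = x := by simp [critOrbit_succ, hx]
  obtain ⟨y, ⟨-, hyx⟩, hy⟩ :=
    intermediate_value_Icc' (neg_two_lt_of_critOrbit_eq_zero hn hx).le
      (continuous_critOrbit (n + 1)).continuousOn
      (show (0 : ℝ) ∈ Set.Icc (critOrbit (n + 1) x) (critOrbit (n + 1) (-2)) from
        ⟨by rw [hfix]; exact hx0.le, (critOrbit_succ_neg_two_pos hn).le⟩)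
  have hyx' : y < x := lt_of_le_of_ne hyx (by rintro rfl; linarith)
  exact (minRoot_le (by omega) hy).trans_lt hyx'

end minRoot

lemma minRoot_one : minRoot 1 = 0 := by
  simp [minRoot]

lemma strictAnti_minRoot_succ : StrictAnti fun n => minRoot (n + 1) := by
  refine strictAnti_nat_of_succ_lt fun n => ?_
  induction n with
  | zero =>
    have h : critOrbit 2 (-1) = 0 := by norm_num [critOrbit_succ]
    linarith [minRoot_le (by norm_num) h, minRoot_one]
  | succ n ih =>
    exact minRoot_succ_lt (by omega) (critOrbit_minRoot (by omega))
      (ih.trans_le (minRoot_nonpos (by omega)))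

/-- For every `m ≥ 2` there exists a real constant `c` such that for
`R(z) = z^2 + c` one has `R^[m] 0 = 0` while `R^[k] 0 ≠ 0` for `1 ≤ k ≤ m - 1`. -/
theorem stmt_8 (m : ℕ) (hm : 2 ≤ m) :
    ∃ c : ℝ, (fun z : ℝ => z ^ 2 + c)^[m] 0 = 0 ∧
      ∀ k : ℕ, 1 ≤ k → k ≤ m - 1 → (fun z : ℝ => z ^ 2 + c)^[k] 0 ≠ 0 := by
  refine ⟨minRoot m, critOrbit_minRoot (by omega), fun k hk hkm hroot => ?_⟩
  have hlt : minRoot m < minRoot k := by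
    obtain ⟨k', rfl⟩ : ∃ k', k = k' + 1 := ⟨k - 1, by omega⟩
    obtain ⟨m', rfl⟩ : ∃ m', m = m' + 1 := ⟨m - 1, by omega⟩
    exact strictAnti_minRoot_succ (by omega)
  exact (minRoot_le hk hroot).not_gt hlt

end
end

section
/- Let c ∈ ℂ and R(z) = z^2 + c be such that R^m(0) = 0 and R^k(0) ≠ 0 for 1 ≤ k ≤ m−1 (0 has exact period m, m ≥ 2). Then b_n(0) := |R^{-n}(0)| satisfies b_n(0) = 2^n for 0 ≤ n ≤ m−1 and b_m(0) = 2^m − 1. -/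
/-!
Every point `a ≠ c` has exactly two preimages under `R z = z ^ 2 + c`, while `c` has only the
critical point `0`. Hence `|R⁻¹ S| = 2 |S|` when the critical value `c` is not in `S`, and
`|R⁻¹ S| = 2 |S| - 1` when it is. Since `c ∈ R^{-n}(0)` exactly when `R^[n + 1] 0 = 0`, the count
doubles at every stage up to `m - 1` and first drops by one at stage `m`.
-/

open Set

theorem Set.Finite.ncard_preimage_of_ncard_fiber_eq {α β : Type*} {f : α → β} {t : Set β}
    (ht : t.Finite) {k : ℕ} (hk : k ≠ 0) (hf : ∀ b ∈ t, (f ⁻¹' {b}).ncard = k) :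
    (f ⁻¹' t).ncard = k * t.ncard := by
  have hfin : ∀ b ∈ t, (f ⁻¹' {b}).Finite := fun b hb ↦
    finite_of_ncard_ne_zero ((hf b hb).symm ▸ hk)
  have hdisj : t.PairwiseDisjoint (fun b ↦ f ⁻¹' {b}) := fun _ _ _ _ hab ↦
    disjoint_singleton.mpr hab |>.preimage f
  rw [← biUnion_preimage_singleton, ht.ncard_biUnion hfin hdisj, finsum_mem_congr rfl hf,
    ← finsum_one, mul_finsum_mem, mul_one]

theorem setOf_sq_eq_sq {R : Type*} [CommRing R] [NoZeroDivisors R] (e : R) :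
    {w : R | w ^ 2 = e ^ 2} = {e, -e} := by
  ext w
  simp [sq_eq_sq_iff_eq_or_eq_neg]

theorem finite_setOf_sq_eq {K : Type*} [Field K] [IsAlgClosed K] (d : K) :
    {w : K | w ^ 2 = d}.Finite := by
  obtain ⟨e, rfl⟩ := IsAlgClosed.exists_pow_nat_eq d two_pos
  rw [setOf_sq_eq_sq]
  exact toFinite _

theorem ncard_setOf_sq_eq {K : Type*} [Field K] [IsAlgClosed K] [NeZero (2 : K)] {d : K}
    (hd : d ≠ 0) : {w : K | w ^ 2 = d}.ncard = 2 := by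
  obtain ⟨e, rfl⟩ := IsAlgClosed.exists_pow_nat_eq d two_pos
  have he : e ≠ 0 := by rintro rfl; simp at hd
  have hne : e ≠ -e := by
    rw [Ne, eq_neg_iff_add_eq_zero, ← two_mul]
    exact mul_ne_zero two_ne_zero he
  rw [setOf_sq_eq_sq, ncard_pair hne]

theorem preimage_quadratic_singleton {K : Type*} [Field K] (c a : K) :
    (fun z : K ↦ z ^ 2 + c) ⁻¹' {a} = {w : K | w ^ 2 = a - c} := by
  ext w
  simp [eq_sub_iff_add_eq]

theorem preimage_quadratic_singleton_self {K : Type*} [Field K] (c : K) :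
    (fun z : K ↦ z ^ 2 + c) ⁻¹' {c} = {0} := by
  ext w
  simp

theorem Set.Finite.preimage_quadratic {K : Type*} [Field K] [IsAlgClosed K] (c : K) {s : Set K}
    (hs : s.Finite) : ((fun z : K ↦ z ^ 2 + c) ⁻¹' s).Finite :=
  hs.preimage' fun a _ ↦ preimage_quadratic_singleton c a ▸ finite_setOf_sq_eq (a - c)

theorem Set.Finite.ncard_preimage_quadratic_of_notMem {K : Type*} [Field K] [IsAlgClosed K]
    [NeZero (2 : K)] (c : K) {s : Set K} (hs : s.Finite) (hc : c ∉ s) :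
    ((fun z : K ↦ z ^ 2 + c) ⁻¹' s).ncard = 2 * s.ncard :=
  hs.ncard_preimage_of_ncard_fiber_eq two_ne_zero fun a ha ↦ by
    rw [preimage_quadratic_singleton]
    exact ncard_setOf_sq_eq (sub_ne_zero.mpr fun h ↦ hc (h ▸ ha))

theorem Set.Finite.ncard_preimage_quadratic_of_mem {K : Type*} [Field K] [IsAlgClosed K]
    [NeZero (2 : K)] (c : K) {s : Set K} (hs : s.Finite) (hc : c ∈ s) :
    ((fun z : K ↦ z ^ 2 + c) ⁻¹' s).ncard = 2 * s.ncard - 1 := by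
  set f : K → K := fun z ↦ z ^ 2 + c
  have hsplit : f ⁻¹' s = insert 0 (f ⁻¹' (s \ {c})) := by
    conv_lhs => rw [← insert_eq_of_mem hc, ← insert_sdiff_singleton, insert_eq, preimage_union,
      preimage_quadratic_singleton_self, ← insert_eq]
  have h0 : (0 : K) ∉ f ⁻¹' (s \ {c}) := by simp [f]
  have hpos : 0 < s.ncard := (ncard_pos hs).mpr ⟨c, hc⟩
  rw [hsplit, ncard_insert_of_notMem h0 (hs.sdiff.preimage_quadratic c),
    hs.sdiff.ncard_preimage_quadratic_of_notMem c (notMem_sdiff_of_mem (mem_singleton c)),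
    ncard_sdiff_singleton_of_mem hc]
  omega

theorem finite_setOf_iterate_quadratic_eq {K : Type*} [Field K] [IsAlgClosed K] (c a : K)
    (n : ℕ) : {w : K | (fun z : K ↦ z ^ 2 + c)^[n] w = a}.Finite := by
  induction n with
  | zero => simp
  | succ n ih => exact ih.preimage_quadratic c

theorem critical_value_mem_setOf_iterate_quadratic_eq_iff {K : Type*} [Field K] (c a : K)
    (n : ℕ) : c ∈ {w : K | (fun z : K ↦ z ^ 2 + c)^[n] w = a} ↔
      (fun z : K ↦ z ^ 2 + c)^[n + 1] 0 = a := by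
  simp [Function.iterate_succ_apply]

theorem ncard_setOf_iterate_quadratic_succ_eq_of_ne {K : Type*} [Field K] [IsAlgClosed K]
    [NeZero (2 : K)] {c a : K} {n : ℕ} (h : (fun z : K ↦ z ^ 2 + c)^[n + 1] 0 ≠ a) :
    {w : K | (fun z : K ↦ z ^ 2 + c)^[n + 1] w = a}.ncard =
      2 * {w : K | (fun z : K ↦ z ^ 2 + c)^[n] w = a}.ncard :=
  (finite_setOf_iterate_quadratic_eq c a n).ncard_preimage_quadratic_of_notMem c
    ((critical_value_mem_setOf_iterate_quadratic_eq_iff c a n).not.mpr h)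

theorem ncard_setOf_iterate_quadratic_succ_eq_of_eq {K : Type*} [Field K] [IsAlgClosed K]
    [NeZero (2 : K)] {c a : K} {n : ℕ} (h : (fun z : K ↦ z ^ 2 + c)^[n + 1] 0 = a) :
    {w : K | (fun z : K ↦ z ^ 2 + c)^[n + 1] w = a}.ncard =
      2 * {w : K | (fun z : K ↦ z ^ 2 + c)^[n] w = a}.ncard - 1 :=
  (finite_setOf_iterate_quadratic_eq c a n).ncard_preimage_quadratic_of_mem c
    ((critical_value_mem_setOf_iterate_quadratic_eq_iff c a n).mpr h)

/-- Let `c : ℂ` and `R(z) = z^2 + c` with `R^[m] 0 = 0` and `R^[k] 0 ≠ 0` for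
`1 ≤ k ≤ m - 1` (so `0` has exact period `m ≥ 2`). Then
`b n := |R^{-n}(0)|` satisfies `b n = 2^n` for `0 ≤ n ≤ m - 1` and
`b m = 2^m - 1`. -/
theorem stmt_12 (c : ℂ) (m : ℕ) (hm : 2 ≤ m)
    (hper : (fun z : ℂ => z ^ 2 + c)^[m] 0 = 0)
    (hmin : ∀ k : ℕ, 1 ≤ k → k ≤ m - 1 → (fun z : ℂ => z ^ 2 + c)^[k] 0 ≠ 0)
    (b : ℕ → ℕ)
    (hb : ∀ n, b n = Set.ncard {w : ℂ | (fun z : ℂ => z ^ 2 + c)^[n] w = 0}) :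
    (∀ n : ℕ, n ≤ m - 1 → b n = 2 ^ n) ∧ b m = 2 ^ m - 1 := by
  have hdouble : ∀ n ≤ m - 1, b n = 2 ^ n := by
    intro n hn
    induction n with
    | zero => simp [hb]
    | succ n ih =>
      rw [hb, ncard_setOf_iterate_quadratic_succ_eq_of_ne (hmin (n + 1) (by omega) hn), ← hb,
        ih (by omega), pow_succ']
  refine ⟨hdouble, ?_⟩
  obtain ⟨k, rfl⟩ : ∃ k, m = k + 1 := ⟨m - 1, by omega⟩
  rw [hb, ncard_setOf_iterate_quadratic_succ_eq_of_eq hper, ← hb, hdouble k (by omega), pow_succ']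
end

section
/- Let A be a unital C*-algebra and X a Hilbert C*-bimodule over A with a finite basis (normalized tight frame) {u_1, …, u_k}, i.e., x = Σ_i u_i⟨u_i, x⟩_A for all x ∈ X. Then for any tracial positive linear functional τ on A, the value Σ_{i=1}^k τ(⟨u_i, u_i⟩_A) is independent of the choice of finite basis. -/
/-!
Expanding `⟨u i, u i⟩` in the basis `v` gives `∑ i, τ ⟨u i, u i⟩ = ∑ i j, τ (⟨u i, v j⟩ ⟨v j, u i⟩)`.
By the trace property the summand is symmetric under exchanging the roles of `u` and `v`,
so the same double sum also equals `∑ j, τ ⟨v j, v j⟩`.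
-/

section FrameTrace

variable {A X : Type*} [Ring A] [AddCommGroup X]
  (smul : X → A → X) (inner : X → X → A)
  (hinner_add : ∀ x y z : X, inner x (y + z) = inner x y + inner x z)
  (hinner_smul : ∀ (x y : X) (a : A), inner x (smul y a) = inner x y * a)
include hinner_add hinner_smul

theorem inner_eq_sum_mul_of_frame {ι : Type*} [Fintype ι] (v : ι → X)
    (hv : ∀ x : X, x = ∑ j, smul (v j) (inner (v j) x)) (x y : X) :
    inner x y = ∑ j, inner x (v j) * inner (v j) y := by
  conv_lhs => rw [hv y]
  exact (map_sum (AddMonoidHom.mk' (inner x) (hinner_add x)) _ _).trans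
    (Finset.sum_congr rfl fun j _ => hinner_smul x (v j) _)

theorem sum_trace_inner_frame_eq {M F : Type*} [AddCommMonoid M] [FunLike F A M]
    [AddMonoidHomClass F A M] (τ : F) (hτ : ∀ a b : A, τ (a * b) = τ (b * a))
    {ι κ : Type*} [Fintype ι] [Fintype κ] (u : ι → X) (v : κ → X)
    (hu : ∀ x : X, x = ∑ i, smul (u i) (inner (u i) x))
    (hv : ∀ x : X, x = ∑ j, smul (v j) (inner (v j) x)) :
    ∑ i, τ (inner (u i) (u i)) = ∑ j, τ (inner (v j) (v j)) := by
  calc ∑ i, τ (inner (u i) (u i))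
      = ∑ i, ∑ j, τ (inner (u i) (v j) * inner (v j) (u i)) :=
        Finset.sum_congr rfl fun i _ => by
          rw [inner_eq_sum_mul_of_frame smul inner hinner_add hinner_smul v hv, map_sum]
    _ = ∑ j, ∑ i, τ (inner (v j) (u i) * inner (u i) (v j)) := by
        rw [Finset.sum_comm]
        exact Finset.sum_congr rfl fun j _ => Finset.sum_congr rfl fun i _ => hτ _ _
    _ = ∑ j, τ (inner (v j) (v j)) :=
        Finset.sum_congr rfl fun j _ => by
          rw [inner_eq_sum_mul_of_frame smul inner hinner_add hinner_smul u hu, map_sum]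

end FrameTrace

theorem stmt_19_general {A X : Type*} [Ring A] [Algebra ℂ A]
    [AddCommGroup X]
    (smul : X → A → X) (inner : X → X → A)
    (hinner_add : ∀ x y z : X, inner x (y + z) = inner x y + inner x z)
    (hinner_smul : ∀ (x y : X) (a : A), inner x (smul y a) = inner x y * a)
    (τ : A →ₗ[ℂ] ℂ)
    (hτ_tr : ∀ a b : A, τ (a * b) = τ (b * a))
    (n k : ℕ) (u : Fin n → X) (v : Fin k → X)
    (hu : ∀ x : X, x = ∑ i, smul (u i) (inner (u i) x))
    (hv : ∀ x : X, x = ∑ j, smul (v j) (inner (v j) x)) :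
    ∑ i, τ (inner (u i) (u i)) = ∑ j, τ (inner (v j) (v j)) :=
  sum_trace_inner_frame_eq smul inner hinner_add hinner_smul τ hτ_tr u v hu hv

/-- Let `A` be a (C*-)algebra with involution, `X` a right `A`-module (with
right action `smul : X → A → X`) equipped with an `A`-valued inner product
`inner : X → X → A`, linear in the second variable, satisfying
`⟨x, y·a⟩ = ⟨x,y⟩ a` and `star ⟨x,y⟩ = ⟨y,x⟩`. If `{u i}` and `{v j}` are two
finite bases (normalized tight frames), i.e. `x = ∑ i, u i · ⟨u i, x⟩` for all
`x`, then for any tracial (positive) linear functional `τ` on `A`,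
`∑ i, τ ⟨u i, u i⟩ = ∑ j, τ ⟨v j, v j⟩`: the value is independent of the basis. -/
theorem stmt_19 {A X : Type*} [Ring A] [StarRing A] [Algebra ℂ A]
    [AddCommGroup X]
    (smul : X → A → X) (inner : X → X → A)
    (hinner_add : ∀ x y z : X, inner x (y + z) = inner x y + inner x z)
    (hinner_smul : ∀ (x y : X) (a : A), inner x (smul y a) = inner x y * a)
    (hinner_star : ∀ x y : X, star (inner x y) = inner y x)
    (τ : A →ₗ[ℂ] ℂ)
    (hτ_pos : ∀ a : A, 0 ≤ (τ (star a * a)).re)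
    (hτ_tr : ∀ a b : A, τ (a * b) = τ (b * a))
    (n k : ℕ) (u : Fin n → X) (v : Fin k → X)
    (hu : ∀ x : X, x = ∑ i, smul (u i) (inner (u i) x))
    (hv : ∀ x : X, x = ∑ j, smul (v j) (inner (v j) x)) :
    ∑ i, τ (inner (u i) (u i)) = ∑ j, τ (inner (v j) (v j)) :=
  stmt_19_general smul inner hinner_add hinner_smul τ hτ_tr n k u v hu hv
end
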